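/- arXiv:1707.00228 — 3 statements merged into one kernel-verified Lean document; each statement's English description precedes it below -/
import Mathlib

section
/- Let G be a simple graph on a vertex type V, let A be a nonempty finite type (the agents), let α₀, α₊ : A → V be start and goal assignments, and let α : ℕ → A → V be a solution trajectory satisfying: (i) α(0) = α₀; (ii) for every t and every agent a, either α(t+1)(a) = α(t)(a) or α(t)(a) is adjacent to α(t+1)(a) in G; and (iii) for every agent a there exists a time after which α(t)(a) = α₊(a) forever. For each agent a define its individual cost ξ(a) as the least time t such that α(t')(a) = α₊(a) for all t' ≥ t, and define the sum-of-costs ξ = ∑_{a∈A} ξ(a), the makespan μ = max_{a∈A} ξ(a), ξ₀ = ∑_{a∈A} dist_G(α₀(a), α₊(a)), μ₀ = max_{a∈A} dist_G(α₀(a), α₊(a)), and Δ = ξ − ξ₀. Then ξ₀ ≤ ξ and μ ≤ μ₀ + Δ. -/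
/-!
Each step of the trajectory either waits or follows an edge, so agent `a` is joined to its goal,
which it occupies at time `ξ(a)`, by a walk of length at most `ξ(a)`; hence its shortest-path
distance is at most `ξ(a)`, and summing gives `ξ₀ ≤ ξ`. All these slacks `ξ(b) - dist(b)` are
nonnegative, so a single agent's slack is at most their sum `Δ`, whence `ξ(a) ≤ μ₀ + Δ`.
-/

open Finset

namespace SimpleGraph

variable {V : Type*} (G : SimpleGraph V)

theorem exists_walk_length_le_of_eq_or_adj {f : ℕ → V}
    (hf : ∀ t, f (t + 1) = f t ∨ G.Adj (f t) (f (t + 1))) (t : ℕ) :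
    ∃ w : G.Walk (f 0) (f t), w.length ≤ t := by
  induction t with
  | zero => exact ⟨.nil, le_rfl⟩
  | succ t ih =>
    obtain ⟨w, hw⟩ := ih
    rcases hf t with hstay | hadj
    · exact ⟨w.copy rfl hstay.symm, by simpa using hw.trans t.le_succ⟩
    · exact ⟨w.concat hadj, by simpa using hw⟩

theorem dist_le_of_eq_or_adj {f : ℕ → V}
    (hf : ∀ t, f (t + 1) = f t ∨ G.Adj (f t) (f (t + 1))) (t : ℕ) :
    G.dist (f 0) (f t) ≤ t :=
  let ⟨w, hw⟩ := G.exists_walk_length_le_of_eq_or_adj hf t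
  (dist_le w).trans hw

end SimpleGraph

namespace Finset

variable {ι M : Type*} [AddCommMonoid M] [LinearOrder M] [IsOrderedCancelAddMonoid M]
  [CanonicallyOrderedAdd M] [Sub M] [OrderedSub M] {s : Finset ι} {f g : ι → M}

theorem le_add_sum_tsub_sum (h : ∀ i ∈ s, f i ≤ g i) {a : ι} (ha : a ∈ s) :
    g a ≤ f a + (∑ i ∈ s, g i - ∑ i ∈ s, f i) :=
  calc g a ≤ f a + (g a - f a) := le_add_tsub
    _ ≤ f a + ∑ i ∈ s, (g i - f i) := by
      gcongr; exact single_le_sum (f := fun i => g i - f i) (fun _ _ => zero_le) ha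
    _ = f a + (∑ i ∈ s, g i - ∑ i ∈ s, f i) := by rw [sum_tsub_distrib s h]

theorem sup_le_sup_add_sum_tsub_sum [OrderBot M] (h : ∀ i ∈ s, f i ≤ g i) :
    s.sup g ≤ s.sup f + (∑ i ∈ s, g i - ∑ i ∈ s, f i) :=
  Finset.sup_le fun a ha =>
    (le_add_sum_tsub_sum h ha).trans (by gcongr; exact le_sup ha)

end Finset

theorem mapf_sic_lower_bound_and_makespan_bound_general
    {V : Type*} (G : SimpleGraph V) {A : Type*} [Fintype A]
    (α₀ αg : A → V) (α : ℕ → A → V)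
    (hstart : α 0 = α₀)
    (hstep : ∀ (t : ℕ) (a : A),
      α (t + 1) a = α t a ∨ G.Adj (α t a) (α (t + 1) a))
    (ξc : A → ℕ)
    (hξc : ∀ a : A, IsLeast {t : ℕ | ∀ t' ≥ t, α t' a = αg a} (ξc a)) :
    (∑ a : A, G.dist (α₀ a) (αg a)) ≤ (∑ a : A, ξc a) ∧
      Finset.univ.sup ξc ≤
        Finset.univ.sup (fun a : A => G.dist (α₀ a) (αg a)) +
          ((∑ a : A, ξc a) - ∑ a : A, G.dist (α₀ a) (αg a)) := by
  have hdist : ∀ a ∈ univ, G.dist (α₀ a) (αg a) ≤ ξc a := fun a _ => by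
    have hreached : α (ξc a) a = αg a := (hξc a).1 (ξc a) le_rfl
    simpa [← hstart, hreached] using G.dist_le_of_eq_or_adj (f := (α · a)) (hstep · a) (ξc a)
  exact ⟨sum_le_sum hdist, sup_le_sup_add_sum_tsub_sum hdist⟩

/-- Proposition 1: for any MAPF solution trajectory, the sum of individual
shortest-path costs `ξ₀` is a lower bound on the sum-of-costs `ξ`, and the
makespan `μ` is at most `μ₀ + Δ` where `Δ = ξ − ξ₀`. -/
theorem mapf_sic_lower_bound_and_makespan_bound
    {V : Type*} (G : SimpleGraph V) {A : Type*} [Fintype A] [Nonempty A]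
    (α₀ αg : A → V) (α : ℕ → A → V)
    (hstart : α 0 = α₀)
    (hstep : ∀ (t : ℕ) (a : A),
      α (t + 1) a = α t a ∨ G.Adj (α t a) (α (t + 1) a))
    (hgoal : ∀ a : A, ∃ t : ℕ, ∀ t' ≥ t, α t' a = αg a)
    (ξc : A → ℕ)
    (hξc : ∀ a : A, IsLeast {t : ℕ | ∀ t' ≥ t, α t' a = αg a} (ξc a)) :
    (∑ a : A, G.dist (α₀ a) (αg a)) ≤ (∑ a : A, ξc a) ∧
      Finset.univ.sup ξc ≤
        Finset.univ.sup (fun a : A => G.dist (α₀ a) (αg a)) +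
          ((∑ a : A, ξc a) - ∑ a : A, G.dist (α₀ a) (αg a)) :=
  mapf_sic_lower_bound_and_makespan_bound_general G α₀ αg α hstart hstep ξc hξc
end

section
/- Let Sol be a type (the solutions of a MAPF instance), let ξ, μ : Sol → ℕ be its sum-of-costs and makespan functions, and let ξ₀, μ₀, Δ, δ : ℕ with Δ ≥ 1. Assume: (i) for every solution s, ξ₀ ≤ ξ(s) and μ(s) ≤ μ₀ + (ξ(s) − ξ₀) (the conclusion of Proposition 1); (ii) there is no solution s with μ(s) ≤ μ₀ + Δ − 1 and ξ(s) ≤ ξ₀ + Δ + δ − 1 (the formula of the penultimate iteration is unsatisfiable); and (iii) there exists a solution s* with ξ(s*) ≤ ξ₀ + Δ + δ (the formula of the last iteration is satisfiable and s* is the solution it represents). Then ξ₀ + Δ ≤ ξ(s) for every solution s, and consequently ξ(s*) ≤ ξ(s) + δ for every solution s; in particular ξ(s*) ≤ ξ_opt + δ where ξ_opt is the minimum of ξ over Sol. -/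
/-! A solution cheaper than `ξ₀ + Δ` would, by the makespan bound of Proposition 1, also have
makespan at most `μ₀ + Δ - 1`, so it would satisfy the penultimate formula. Hence every solution
costs at least `ξ₀ + Δ`, while the solution found costs at most `ξ₀ + Δ + δ`; the optimum is
attained since costs are natural numbers. -/

theorem add_le_of_not_exists_within_bounds {Sol : Type*} (ξ μ : Sol → ℕ) (ξ₀ μ₀ Δ δ : ℕ)
    (hprop1 : ∀ s : Sol, ξ₀ ≤ ξ s ∧ μ s ≤ μ₀ + (ξ s - ξ₀))
    (hunsat : ¬ ∃ s : Sol, μ s ≤ μ₀ + Δ - 1 ∧ ξ s ≤ ξ₀ + Δ + δ - 1) (s : Sol) :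
    ξ₀ + Δ ≤ ξ s := by
  by_contra! hcheap
  obtain ⟨hcost, hmakespan⟩ := hprop1 s
  exact hunsat ⟨s, by omega, by omega⟩

theorem emddsat_suboptimality_bound_general
    {Sol : Type*} (ξ μ : Sol → ℕ) (ξ₀ μ₀ Δ δ : ℕ)
    (hprop1 : ∀ s : Sol, ξ₀ ≤ ξ s ∧ μ s ≤ μ₀ + (ξ s - ξ₀))
    (hunsat : ¬ ∃ s : Sol, μ s ≤ μ₀ + Δ - 1 ∧ ξ s ≤ ξ₀ + Δ + δ - 1)
    (s' : Sol) (hsat : ξ s' ≤ ξ₀ + Δ + δ) :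
    (∀ s : Sol, ξ₀ + Δ ≤ ξ s) ∧
      (∀ s : Sol, ξ s' ≤ ξ s + δ) ∧
      ξ s' ≤ (⨅ s : Sol, ξ s) + δ := by
  have hlower := add_le_of_not_exists_within_bounds ξ μ ξ₀ μ₀ Δ δ hprop1 hunsat
  have hnear : ∀ s : Sol, ξ s' ≤ ξ s + δ := fun s => by
    have := hlower s
    omega
  have : Nonempty Sol := ⟨s'⟩
  obtain ⟨sopt, hsopt⟩ := ciInf_mem ξ
  exact ⟨hlower, hnear, hsopt ▸ hnear sopt⟩

/-- Proposition 2: if the penultimate iteration's formula is unsatisfiable and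
the last one is satisfiable with solution `s*`, then every solution has
sum-of-costs at least `ξ₀ + Δ`, hence `ξ s* ≤ ξ_opt + δ`. -/
theorem emddsat_suboptimality_bound
    {Sol : Type*} (ξ μ : Sol → ℕ) (ξ₀ μ₀ Δ δ : ℕ) (hΔ : 1 ≤ Δ)
    (hprop1 : ∀ s : Sol, ξ₀ ≤ ξ s ∧ μ s ≤ μ₀ + (ξ s - ξ₀))
    (hunsat : ¬ ∃ s : Sol, μ s ≤ μ₀ + Δ - 1 ∧ ξ s ≤ ξ₀ + Δ + δ - 1)
    (s' : Sol) (hsat : ξ s' ≤ ξ₀ + Δ + δ) :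
    (∀ s : Sol, ξ₀ + Δ ≤ ξ s) ∧
      (∀ s : Sol, ξ s' ≤ ξ s + δ) ∧
      ξ s' ≤ (⨅ s : Sol, ξ s) + δ :=
  emddsat_suboptimality_bound_general ξ μ ξ₀ μ₀ Δ δ hprop1 hunsat s' hsat
end

section
/- Let Sol be a type (the solutions of a MAPF instance), let ξ, μ : Sol → ℕ be its sum-of-costs and makespan functions, let k ≥ 1 be a natural number (the number of agents), and let ξ₀, μ₀, Δ : ℕ with Δ ≥ 1 and ξ₀ + Δ ≥ 1. Assume: (i) for every solution s, ξ₀ ≤ ξ(s), μ(s) ≤ μ₀ + (ξ(s) − ξ₀), and ξ(s) ≤ k · μ(s) (the sum of the k individual costs is at most k times their maximum); (ii) there is no solution s with ξ(s) ≤ ξ₀ + Δ − 1; and (iii) there exists a solution s* with μ(s*) ≤ μ₀ + Δ. Then for every solution s, (ξ(s*) : ℝ) ≤ (k · (μ₀ + Δ) / (ξ₀ + Δ)) · ξ(s); i.e., the returned solution is (k·(μ₀+Δ)/(ξ₀+Δ))-bounded suboptimal. -/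
theorem le_div_mul_of_le_of_le {α : Type*} [Field α] [LinearOrder α] [IsStrictOrderedRing α]
    {a b c x : α} (hb : 0 ≤ b) (hab : a ≤ b) (hc : 0 < c) (hcx : c ≤ x) : a ≤ b / c * x :=
  hab.trans <| by
    rw [div_mul_eq_mul_div, le_div_iff₀ hc]
    exact mul_le_mul_of_nonneg_left hcx hb

theorem emddsat_worst_case_bound_general
    {Sol : Type*} (ξ μ : Sol → ℕ) (k : ℕ)
    (ξ₀ μ₀ Δ : ℕ) (hpos : 1 ≤ ξ₀ + Δ)
    (hprop1 : ∀ s : Sol, ξ₀ ≤ ξ s ∧ μ s ≤ μ₀ + (ξ s - ξ₀) ∧ ξ s ≤ k * μ s)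
    (hunsat : ¬ ∃ s : Sol, ξ s ≤ ξ₀ + Δ - 1)
    (s' : Sol) (hsat : μ s' ≤ μ₀ + Δ) :
    ∀ s : Sol,
      (ξ s' : ℝ) ≤ ((k : ℝ) * ((μ₀ : ℝ) + (Δ : ℝ)) / ((ξ₀ : ℝ) + (Δ : ℝ))) * (ξ s : ℝ) := by
  intro s
  have hreturned : ξ s' ≤ k * (μ₀ + Δ) := (hprop1 s').2.2.trans (Nat.mul_le_mul_left k hsat)
  have hoptimal : ξ₀ + Δ ≤ ξ s := by
    have : ¬ ξ s ≤ ξ₀ + Δ - 1 := fun h => hunsat ⟨s, h⟩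
    omega
  exact le_div_mul_of_le_of_le (by positivity) (by exact_mod_cast hreturned)
    (by exact_mod_cast hpos) (by exact_mod_cast hoptimal)

/-- Worst-case bound: with the cardinality constraint fully relaxed, the
returned solution is `(k·(μ₀+Δ)/(ξ₀+Δ))`-bounded suboptimal. -/
theorem emddsat_worst_case_bound
    {Sol : Type*} (ξ μ : Sol → ℕ) (k : ℕ) (hk : 1 ≤ k)
    (ξ₀ μ₀ Δ : ℕ) (hΔ : 1 ≤ Δ) (hpos : 1 ≤ ξ₀ + Δ)
    (hprop1 : ∀ s : Sol, ξ₀ ≤ ξ s ∧ μ s ≤ μ₀ + (ξ s - ξ₀) ∧ ξ s ≤ k * μ s)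
    (hunsat : ¬ ∃ s : Sol, ξ s ≤ ξ₀ + Δ - 1)
    (s' : Sol) (hsat : μ s' ≤ μ₀ + Δ) :
    ∀ s : Sol,
      (ξ s' : ℝ) ≤ ((k : ℝ) * ((μ₀ : ℝ) + (Δ : ℝ)) / ((ξ₀ : ℝ) + (Δ : ℝ))) * (ξ s : ℝ) :=
  emddsat_worst_case_bound_general ξ μ k ξ₀ μ₀ Δ hpos hprop1 hunsat s' hsat
end
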